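/- Let I⁽¹⁾ be a nonempty finite set, M_i ∈ (0,1) for i ∈ I⁽¹⁾, and for γ ∈ (0, 1/2) let d₀ := γ/(1−γ). Define Φ⁽¹⁾(γ) := expit(logit((1/|I⁽¹⁾|) Σ_i expit(logit(M_i) − log(d₀))) + log(d₀)). Then lim_{γ→0⁺} Φ⁽¹⁾(γ) = expit(log(Λ⁽¹⁾)), where Λ⁽¹⁾ := ((1/|I⁽¹⁾|) Σ_i (1−M_i)/M_i)^{−1} is the harmonic mean of the odds M_i/(1−M_i). -/

import Mathlib

open Filter

/-- `expit x = e^x / (1 + e^x)`. -/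
noncomputable def expit (x : ℝ) : ℝ := Real.exp x / (1 + Real.exp x)

/-- `logit a = log (a / (1 - a))`. -/
noncomputable def logit (a : ℝ) : ℝ := Real.log (a / (1 - a))

lemma continuous_expit : Continuous expit :=
  Real.continuous_exp.div (continuous_const.add Real.continuous_exp) (fun x => by positivity)

lemma expit_log {x : ℝ} (hx : 0 < x) : expit (Real.log x) = x / (1 + x) := by
  simp [expit, Real.exp_log hx]

/-- As `γ → 0⁺`, the fission-adjusted block mean `Φ⁽¹⁾(γ)` over indices with train value
`1` converges to `expit(log Λ⁽¹⁾)`, where `Λ⁽¹⁾` is the harmonic mean of the odds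
`M i / (1 - M i)`. -/
theorem phi1_limit_gamma_to_zero
    {ι : Type*} (I1 : Finset ι) (h1 : I1.Nonempty)
    (M : ι → ℝ) (hM : ∀ i ∈ I1, M i ∈ Set.Ioo (0 : ℝ) 1) :
    Tendsto
      (fun γ : ℝ => expit (logit ((I1.card : ℝ)⁻¹ *
          ∑ i ∈ I1, expit (logit (M i) - Real.log (γ / (1 - γ)))) +
        Real.log (γ / (1 - γ))))
      (nhdsWithin 0 (Set.Ioo (0 : ℝ) (1/2)))
      (nhds (expit (Real.log (((I1.card : ℝ)⁻¹ * ∑ i ∈ I1, (1 - M i) / M i)⁻¹)))) := by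
  classical
  have hc : (0:ℝ) < I1.card := by exact_mod_cast Finset.card_pos.mpr h1
  set Q : ι → ℝ := fun i => M i / (1 - M i) with hQ
  have hQpos : ∀ i ∈ I1, 0 < Q i := fun i hi =>
    div_pos (hM i hi).1 (by linarith [(hM i hi).2])
  have hD0 : 0 < ∑ i ∈ I1, (Q i)⁻¹ :=
    Finset.sum_pos (fun i hi => inv_pos.mpr (hQpos i hi)) h1
  set L : ℝ := (I1.card : ℝ) / ∑ i ∈ I1, (Q i)⁻¹ with hL
  have hLval : (((I1.card : ℝ)⁻¹ * ∑ i ∈ I1, (1 - M i) / M i)⁻¹) = L := by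
    have hs : ∑ i ∈ I1, (1 - M i) / M i = ∑ i ∈ I1, (Q i)⁻¹ :=
      Finset.sum_congr rfl fun i _ => by rw [hQ]; simp [inv_div]
    rw [hs, hL, mul_inv, inv_inv, div_eq_mul_inv]
  have hLpos : 0 < L := div_pos hc hD0
  set h : ℝ → ℝ := fun γ =>
    (∑ i ∈ I1, Q i / (γ/(1-γ) + Q i)) / (∑ i ∈ I1, (γ/(1-γ) + Q i)⁻¹) with hh
  -- limit of h
  have hd0 : Tendsto (fun γ : ℝ => γ/(1-γ)) (nhds 0) (nhds 0) := by
    have : ContinuousAt (fun γ : ℝ => γ/(1-γ)) 0 :=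
      (continuousAt_id).div (continuousAt_const.sub continuousAt_id) (by norm_num)
    simpa using this.tendsto
  have hcont : Tendsto h (nhdsWithin 0 (Set.Ioo 0 (1/2))) (nhds L) := by
    have hnum : Tendsto (fun γ : ℝ => ∑ i ∈ I1, Q i / (γ/(1-γ) + Q i)) (nhds 0)
        (nhds (I1.card : ℝ)) := by
      have : Tendsto (fun γ : ℝ => ∑ i ∈ I1, Q i / (γ/(1-γ) + Q i)) (nhds 0)
          (nhds (∑ i ∈ I1, Q i / (0 + Q i))) := by
        apply tendsto_finset_sum
        intro i hi
        exact tendsto_const_nhds.div (hd0.add tendsto_const_nhds)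
          (by simpa using (hQpos i hi).ne')
      have heq : ∑ i ∈ I1, Q i / (0 + Q i) = (I1.card : ℝ) := by
        rw [Finset.sum_congr rfl (fun i hi => by
          rw [zero_add, div_self (hQpos i hi).ne'])]
        simp
      rwa [heq] at this
    have hden : Tendsto (fun γ : ℝ => ∑ i ∈ I1, (γ/(1-γ) + Q i)⁻¹) (nhds 0)
        (nhds (∑ i ∈ I1, (Q i)⁻¹)) := by
      have : Tendsto (fun γ : ℝ => ∑ i ∈ I1, (γ/(1-γ) + Q i)⁻¹) (nhds 0)
          (nhds (∑ i ∈ I1, (0 + Q i)⁻¹)) := by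
        apply tendsto_finset_sum
        intro i hi
        exact ((hd0.add tendsto_const_nhds).inv₀ (by simpa using (hQpos i hi).ne'))
      simpa using this
    exact ((hnum.div hden hD0.ne').mono_left nhdsWithin_le_nhds)
  rw [hLval]
  have hfinal : Tendsto (fun γ => expit (Real.log (h γ)))
      (nhdsWithin 0 (Set.Ioo 0 (1/2))) (nhds (expit (Real.log L))) :=
    ((continuous_expit.continuousAt.comp (Real.continuousAt_log hLpos.ne')).tendsto).comp hcont
  apply hfinal.congr'
  filter_upwards [self_mem_nhdsWithin] with γ hγ
  obtain ⟨hγ0, hγh⟩ := hγ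
  have h1γ : (0:ℝ) < 1 - γ := by linarith
  set d : ℝ := γ/(1-γ) with hdd
  have hd : 0 < d := div_pos hγ0 h1γ
  have hdQ : ∀ i ∈ I1, 0 < d + Q i := fun i hi => by linarith [hQpos i hi]
  -- pointwise rewriting of each summand
  have key1 : ∀ i ∈ I1, expit (logit (M i) - Real.log d) = Q i / (d + Q i) := by
    intro i hi
    have hlq : logit (M i) = Real.log (Q i) := rfl
    rw [hlq, ← Real.log_div (hQpos i hi).ne' hd.ne', expit_log (div_pos (hQpos i hi) hd)]
    field_simp
  have hsum : ∑ i ∈ I1, expit (logit (M i) - Real.log d) = ∑ i ∈ I1, Q i / (d + Q i) :=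
    Finset.sum_congr rfl key1
  set N : ℝ := ∑ i ∈ I1, Q i / (d + Q i) with hN
  set D : ℝ := ∑ i ∈ I1, (d + Q i)⁻¹ with hD
  have hNpos : 0 < N := Finset.sum_pos (fun i hi => div_pos (hQpos i hi) (hdQ i hi)) h1
  have hDpos : 0 < D := Finset.sum_pos (fun i hi => inv_pos.mpr (hdQ i hi)) h1
  set S : ℝ := (I1.card : ℝ)⁻¹ * N with hS
  have hSub : (I1.card : ℝ) - N = d * D := by
    have : (I1.card : ℝ) - N = ∑ i ∈ I1, (1 - Q i / (d + Q i)) := by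
      rw [Finset.sum_sub_distrib]
      simp [hN]
    rw [this, hD, Finset.mul_sum]
    apply Finset.sum_congr rfl
    intro i hi
    have := (hdQ i hi).ne'
    field_simp
    ring
  have h1S : 1 - S = (I1.card : ℝ)⁻¹ * (d * D) := by
    rw [← hSub, hS, mul_sub, inv_mul_cancel₀ hc.ne']
  have hSpos : 0 < S := mul_pos (inv_pos.mpr hc) hNpos
  have h1Spos : 0 < 1 - S := by rw [h1S]; positivity
  have hratio : S / (1 - S) = N / (d * D) := by
    rw [hS, h1S, mul_div_mul_left _ _ (inv_pos.mpr hc).ne']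
  have hkey : logit S + Real.log d = Real.log (N / D) := by
    rw [logit, hratio, ← Real.log_mul (by positivity) hd.ne']
    congr 1
    field_simp
  rw [hsum, hkey]
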